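/- arXiv:0908.1509 — 3 statements merged into one kernel-verified Lean document; each statement's English description precedes it below -/
import Mathlib

section
/- For every m > 0 and every r > 0, (α / (2 Γ(1 − α/2))) ∫_0^∞ (4πu)^{−d/2} e^{−r²/(4u)} e^{−m^{2/α} u} u^{−1−α/2} du = A(d,−α) · r^{−d−α} · ψ(m^{1/α} r). In other words, the Lévy density of the relativistic α-stable process with weight m, evaluated at a point at distance r from the origin, equals A(d,−α) r^{−d−α} ψ(m^{1/α} r). -/
open MeasureTheory Real Set

/-- `ψ(r) = 2^{-(d+α)} Γ((d+α)/2)^{-1} ∫_0^∞ s^{(d+α)/2-1} e^{-s/4 - r²/s} ds`. -/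
noncomputable def psi (d : ℕ) (α r : ℝ) : ℝ :=
  2 ^ (-((d : ℝ) + α)) * (Real.Gamma (((d : ℝ) + α) / 2))⁻¹ *
    ∫ s in Set.Ioi (0 : ℝ), s ^ (((d : ℝ) + α) / 2 - 1) * Real.exp (-(s / 4) - r ^ 2 / s)

/-- `A(d, -α) = α 2^{α-1} π^{-d/2} Γ((d+α)/2) Γ(1-α/2)^{-1}`. -/
noncomputable def Aconst (d : ℕ) (α : ℝ) : ℝ :=
  α * 2 ^ (α - 1) * Real.pi ^ (-(d : ℝ) / 2) * Real.Gamma (((d : ℝ) + α) / 2) /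
    Real.Gamma (1 - α / 2)

/-- `j^m(r) = A(d,-α) r^{-d-α} ψ(m^{1/α} r)`, the Lévy density of the relativistic
α-stable process with weight `m`. -/
noncomputable def jm (d : ℕ) (α m r : ℝ) : ℝ :=
  Aconst d α * r ^ (-(d : ℝ) - α) * psi d α (m ^ (1 / α) * r)

/-- `p^m(t,x) = (2π)^{-d} ∫_{ℝ^d} e^{-i x·ξ} exp(-t((|ξ|² + m^{2/α})^{α/2} - m)) dξ`,
the transition density of the relativistic α-stable process with weight `m`. -/
noncomputable def relDensity (d : ℕ) (α m t : ℝ) (x : EuclideanSpace ℝ (Fin d)) : ℝ :=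
  (2 * Real.pi) ^ (-(d : ℝ)) *
    (∫ ξ : EuclideanSpace ℝ (Fin d),
      Complex.exp (-(Complex.I * ((inner ℝ x ξ : ℝ) : ℂ)) -
        ((t * ((‖ξ‖ ^ 2 + m ^ (2 / α)) ^ (α / 2) - m) : ℝ) : ℂ))).re

/-!
Substituting `s = r² / u` in the subordination integral turns it into the integral defining `ψ`
at `ρ = m^{1/α} r`: the exponents match because `r² / (4u) + m^{2/α} u = s / 4 + ρ² / s`, and
the powers of `u` together with `du = r² s⁻² ds` collect into `r^{-d-α} s^{(d+α)/2-1} ds`.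
What is left is bookkeeping of constants, using `(4π)^{-d/2} = 2^{-d} π^{-d/2}`.
-/

theorem integral_comp_div_Ioi {E : Type*} [NormedAddCommGroup E] [NormedSpace ℝ E]
    (f : ℝ → E) {a : ℝ} (ha : 0 < a) :
    ∫ u in Ioi (0 : ℝ), (u ^ 2)⁻¹ • f (a / u) = a⁻¹ • ∫ s in Ioi (0 : ℝ), f s := by
  have hinv := integral_comp_rpow_Ioi (fun y => f (a * y)) (p := -1) (by norm_num)
  rw [integral_comp_mul_left_Ioi f 0 ha, mul_zero] at hinv
  rw [← hinv]
  refine setIntegral_congr_fun measurableSet_Ioi fun u (hu : 0 < u) => ?_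
  norm_num [rpow_neg_one, rpow_neg hu.le, div_eq_mul_inv]

noncomputable def psiIntegrand (β ρ s : ℝ) : ℝ :=
  s ^ (β - 1) * exp (-(s / 4) - ρ ^ 2 / s)

theorem psiIntegrand_sq_div {β μ r ρ u : ℝ} (hr : 0 < r) (hu : 0 < u)
    (hρ : ρ ^ 2 = μ * r ^ 2) :
    psiIntegrand β ρ (r ^ 2 / u) =
      r ^ (2 * β - 2) * u ^ (1 - β) * (exp (-(r ^ 2 / (4 * u))) * exp (-μ * u)) := by
  have hpow : (r ^ 2 / u) ^ (β - 1) = r ^ (2 * β - 2) * u ^ (1 - β) := by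
    rw [div_rpow (by positivity) hu.le, ← rpow_natCast, ← rpow_mul hr.le, div_eq_mul_inv,
      ← rpow_neg hu.le]
    push_cast
    ring_nf
  have hexp : -(r ^ 2 / u / 4) - ρ ^ 2 / (r ^ 2 / u) = -(r ^ 2 / (4 * u)) + -μ * u := by
    rw [hρ]
    field_simp
    ring
  rw [psiIntegrand, hpow, hexp, exp_add]

theorem heatKernel_subordination_integrand_eq {ν α μ r ρ u : ℝ} (hr : 0 < r) (hu : 0 < u)
    (hρ : ρ ^ 2 = μ * r ^ 2) :
    (4 * π * u) ^ (-ν / 2) * exp (-(r ^ 2 / (4 * u))) * exp (-μ * u) * u ^ (-1 - α / 2) =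
      (4 * π) ^ (-ν / 2) * r ^ (2 - ν - α) *
        ((u ^ 2)⁻¹ * psiIntegrand ((ν + α) / 2) ρ (r ^ 2 / u)) := by
  have hr' : r ^ (2 - ν - α) * r ^ (2 * ((ν + α) / 2) - 2) = 1 := by
    rw [← rpow_add hr]; ring_nf; exact rpow_zero r
  have hu' : u ^ (-ν / 2) * u ^ (-1 - α / 2) = (u ^ 2)⁻¹ * u ^ (1 - (ν + α) / 2) := by
    rw [← rpow_natCast, ← rpow_neg hu.le, ← rpow_add hu, ← rpow_add hu]
    push_cast
    ring_nf
  rw [psiIntegrand_sq_div hr hu hρ, mul_rpow (by positivity) hu.le]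
  linear_combination (4 * π) ^ (-ν / 2) * exp (-(r ^ 2 / (4 * u))) * exp (-μ * u) *
    (hu' - (u ^ 2)⁻¹ * u ^ (1 - (ν + α) / 2) * hr')

theorem integral_heatKernel_subordination {ν α μ r ρ : ℝ} (hr : 0 < r)
    (hρ : ρ ^ 2 = μ * r ^ 2) :
    ∫ u in Ioi (0 : ℝ),
        (4 * π * u) ^ (-ν / 2) * exp (-(r ^ 2 / (4 * u))) * exp (-μ * u) * u ^ (-1 - α / 2) =
      (4 * π) ^ (-ν / 2) * r ^ (-ν - α) *
        ∫ s in Ioi (0 : ℝ), psiIntegrand ((ν + α) / 2) ρ s := by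
  have hr2 : r ^ (2 - ν - α) * (r ^ 2)⁻¹ = r ^ (-ν - α) := by
    rw [← rpow_natCast, ← rpow_neg hr.le, ← rpow_add hr]
    push_cast
    ring_nf
  calc _ = ∫ u in Ioi (0 : ℝ), (4 * π) ^ (-ν / 2) * r ^ (2 - ν - α) *
        ((u ^ 2)⁻¹ • psiIntegrand ((ν + α) / 2) ρ (r ^ 2 / u)) :=
        setIntegral_congr_fun measurableSet_Ioi fun u (hu : 0 < u) =>
          heatKernel_subordination_integrand_eq hr hu hρ
    _ = _ := by
      rw [integral_const_mul, integral_comp_div_Ioi _ (by positivity), smul_eq_mul, ← hr2]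
      ring

theorem rpow_one_div_mul_sq {m : ℝ} (hm : 0 ≤ m) (α r : ℝ) :
    (m ^ (1 / α) * r) ^ 2 = m ^ (2 / α) * r ^ 2 := by
  rw [mul_pow, ← rpow_natCast, ← rpow_mul hm]
  ring_nf

theorem psi_eq_integral_psiIntegrand (d : ℕ) (α ρ : ℝ) :
    psi d α ρ = 2 ^ (-((d : ℝ) + α)) * (Gamma (((d : ℝ) + α) / 2))⁻¹ *
      ∫ s in Ioi (0 : ℝ), psiIntegrand (((d : ℝ) + α) / 2) ρ s :=
  rfl

theorem levyDensity_eq_general (d : ℕ) (α : ℝ) (hα : α ∈ Set.Ioo (0:ℝ) 2)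
    (m : ℝ) (hm : 0 < m) (r : ℝ) (hr : 0 < r) :
    (α / (2 * Real.Gamma (1 - α / 2))) *
      ∫ u in Set.Ioi (0 : ℝ),
        (4 * Real.pi * u) ^ (-(d : ℝ) / 2) * Real.exp (-(r ^ 2 / (4 * u))) *
          Real.exp (-(m ^ (2 / α)) * u) * u ^ (-1 - α / 2)
    = Aconst d α * r ^ (-(d : ℝ) - α) * psi d α (m ^ (1 / α) * r) := by
  have hΓ : Gamma (((d : ℝ) + α) / 2) ≠ 0 :=
    (Gamma_pos_of_pos (by linarith [hα.1, d.cast_nonneg (α := ℝ)])).ne'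
  have h4π : (4 * π) ^ (-(d : ℝ) / 2) = 2 ^ (-(d : ℝ)) * π ^ (-(d : ℝ) / 2) := by
    rw [mul_rpow (by norm_num) pi_pos.le, show (4 : ℝ) = 2 ^ (2 : ℝ) by norm_num,
      ← rpow_mul (by norm_num)]
    ring_nf
  have h2pow : (2 : ℝ) ^ (α - 1) * 2 ^ (-((d : ℝ) + α)) * 2 = 2 ^ (-(d : ℝ)) := by
    rw [← rpow_add two_pos, ← rpow_add_one two_ne_zero]
    ring_nf
  rw [integral_heatKernel_subordination hr (rpow_one_div_mul_sq hm.le α r), h4π, Aconst,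
    psi_eq_integral_psiIntegrand]
  generalize ∫ s in Ioi (0 : ℝ), psiIntegrand (((d : ℝ) + α) / 2) (m ^ (1 / α) * r) s = I
  rw [← h2pow]
  field_simp

/-- The Lévy density of the relativistic α-stable process with weight `m`, evaluated at
distance `r` from the origin, equals `A(d,-α) r^{-d-α} ψ(m^{1/α} r)`. -/
theorem levyDensity_eq (d : ℕ) (hd : 1 ≤ d) (α : ℝ) (hα : α ∈ Set.Ioo (0:ℝ) 2)
    (m : ℝ) (hm : 0 < m) (r : ℝ) (hr : 0 < r) :
    (α / (2 * Real.Gamma (1 - α / 2))) *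
      ∫ u in Set.Ioi (0 : ℝ),
        (4 * Real.pi * u) ^ (-(d : ℝ) / 2) * Real.exp (-(r ^ 2 / (4 * u))) *
          Real.exp (-(m ^ (2 / α)) * u) * u ^ (-1 - α / 2)
    = Aconst d α * r ^ (-(d : ℝ) - α) * psi d α (m ^ (1 / α) * r) :=
  levyDensity_eq_general d α hα m hm r hr
end

section
/- For every a > 0 and M > 0 there exists a constant C > 0, depending only on d, α, a and M, such that for every m ∈ (0, M] and every r ∈ (0, a), j^m(r) ≤ C · j^m(2r). -/
open MeasureTheory Real Set

/-!
Since `ψ` is positive and decreasing in `|r|`, on `(0, a)` we can bound `ψ(m^{1/α} r)` above by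
`ψ(0)` and `ψ(m^{1/α} 2r)` below by `ψ(2 M^{1/α} a)`; the power `r^{-d-α}` contributes the
factor `2^{d+α}`. Hence `C = 2^{d+α} ψ(0) / ψ(2 M^{1/α} a)` works.
-/

noncomputable def psiKernel (q r s : ℝ) : ℝ :=
  s ^ (q - 1) * Real.exp (-(s / 4) - r ^ 2 / s)

lemma psi_eq (d : ℕ) (α r : ℝ) :
    psi d α r = 2 ^ (-((d : ℝ) + α)) * (Real.Gamma (((d : ℝ) + α) / 2))⁻¹ *
      ∫ s in Ioi (0 : ℝ), psiKernel (((d : ℝ) + α) / 2) r s :=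
  rfl

lemma psiKernel_pos (q r : ℝ) {s : ℝ} (hs : 0 < s) : 0 < psiKernel q r s :=
  mul_pos (rpow_pos_of_pos hs _) (exp_pos _)

lemma psiKernel_le_of_sq_le (q : ℝ) {x y s : ℝ} (hxy : x ^ 2 ≤ y ^ 2) (hs : 0 < s) :
    psiKernel q y s ≤ psiKernel q x s := by
  unfold psiKernel
  gcongr

lemma continuousOn_psiKernel (q r : ℝ) : ContinuousOn (psiKernel q r) (Ioi 0) := by
  intro s hs
  have hs0 : s ≠ 0 := (mem_Ioi.mp hs).ne'
  refine ContinuousAt.continuousWithinAt ?_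
  unfold psiKernel
  fun_prop (disch := simp [hs0])

lemma integrableOn_psiKernel {q : ℝ} (hq : 0 < q) (r : ℝ) :
    IntegrableOn (psiKernel q r) (Ioi 0) := by
  have hmajorant : IntegrableOn (fun s : ℝ => s ^ (q - 1) * exp (-(1 / 4) * s ^ (1 : ℝ))) (Ioi 0) :=
    integrableOn_rpow_mul_exp_neg_mul_rpow (by linarith) one_pos (by norm_num)
  refine hmajorant.mono' ((continuousOn_psiKernel q r).aestronglyMeasurable measurableSet_Ioi) ?_
  filter_upwards [ae_restrict_mem measurableSet_Ioi] with s hs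
  have hs0 : 0 < s := hs
  rw [Real.norm_of_nonneg (psiKernel_pos q r hs0).le, psiKernel, rpow_one]
  have : 0 ≤ r ^ 2 / s := by positivity
  gcongr
  linarith

lemma setIntegral_psiKernel_pos {q : ℝ} (hq : 0 < q) (r : ℝ) :
    0 < ∫ s in Ioi (0 : ℝ), psiKernel q r s := by
  have hnonneg : 0 ≤ᵐ[volume.restrict (Ioi 0)] psiKernel q r :=
    ae_restrict_of_forall_mem measurableSet_Ioi fun s hs => (psiKernel_pos q r hs).le
  have hsupport : Function.support (psiKernel q r) ∩ Ioi 0 = Ioi 0 :=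
    inter_eq_right.mpr fun s hs => (psiKernel_pos q r hs).ne'
  rw [setIntegral_pos_iff_support_of_nonneg_ae hnonneg (integrableOn_psiKernel hq r), hsupport]
  simp

lemma psi_pos {d : ℕ} {α : ℝ} (h : 0 < (d : ℝ) + α) (r : ℝ) : 0 < psi d α r := by
  have := setIntegral_psiKernel_pos (by positivity : 0 < ((d : ℝ) + α) / 2) r
  rw [psi_eq]
  positivity

lemma psi_le_psi_of_abs_le {d : ℕ} {α : ℝ} (h : 0 < (d : ℝ) + α) {x y : ℝ} (hxy : |x| ≤ |y|) :
    psi d α y ≤ psi d α x := by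
  have hq : 0 < ((d : ℝ) + α) / 2 := by positivity
  rw [psi_eq, psi_eq]
  refine mul_le_mul_of_nonneg_left ?_ (by positivity)
  exact setIntegral_mono_on (integrableOn_psiKernel hq y) (integrableOn_psiKernel hq x)
    measurableSet_Ioi fun s hs => psiKernel_le_of_sq_le _ (sq_le_sq.mpr hxy) hs

lemma Aconst_pos {d : ℕ} {α : ℝ} (hα : α ∈ Ioo (0 : ℝ) 2) : 0 < Aconst d α := by
  obtain ⟨hα0, hα2⟩ := hα
  have : 0 < Gamma (1 - α / 2) := Gamma_pos_of_pos (by linarith)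
  unfold Aconst
  positivity

lemma jm_le_of_psi_le {d : ℕ} {α : ℝ} (hA : 0 ≤ Aconst d α) {m r c : ℝ} (hr : 0 ≤ r)
    (hψ : psi d α (m ^ (1 / α) * r) ≤ c * psi d α (m ^ (1 / α) * (2 * r))) :
    jm d α m r ≤ 2 ^ ((d : ℝ) + α) * c * jm d α m (2 * r) := by
  have hpow : (2 : ℝ) ^ ((d : ℝ) + α) * (2 * r) ^ (-(d : ℝ) - α) = r ^ (-(d : ℝ) - α) := by
    rw [mul_rpow zero_le_two hr, ← mul_assoc, ← rpow_add two_pos, ← neg_add', add_neg_cancel,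
      rpow_zero, one_mul]
  calc jm d α m r ≤ Aconst d α * r ^ (-(d : ℝ) - α) * (c * psi d α (m ^ (1 / α) * (2 * r))) := by
        unfold jm
        gcongr
    _ = 2 ^ ((d : ℝ) + α) * c * jm d α m (2 * r) := by
        rw [jm, ← hpow]
        ring

theorem jm_doubling_general (d : ℕ) (α : ℝ) (hα : α ∈ Set.Ioo (0:ℝ) 2)
    (a M : ℝ) :
    ∃ C : ℝ, 0 < C ∧ ∀ m ∈ Set.Ioc (0:ℝ) M, ∀ r ∈ Set.Ioo (0:ℝ) a,
      jm d α m r ≤ C * jm d α m (2 * r) := by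
  have hdα : 0 < (d : ℝ) + α := by linarith [hα.1, d.cast_nonneg (α := ℝ)]
  set R := M ^ (1 / α) * (2 * a)
  have hψ0 := psi_pos hdα 0
  have hψR := psi_pos hdα R
  refine ⟨2 ^ ((d : ℝ) + α) * (psi d α 0 / psi d α R), by positivity, ?_⟩
  rintro m ⟨hm, hmM⟩ r ⟨hr, hra⟩
  refine jm_le_of_psi_le (Aconst_pos hα).le hr.le ?_
  have hscaled : m ^ (1 / α) * (2 * r) ≤ M ^ (1 / α) * (2 * a) := by
    have hα0 : 0 < α := hα.1
    gcongr
    exact rpow_nonneg (hm.le.trans hmM) _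
  have hnear : psi d α (m ^ (1 / α) * r) ≤ psi d α 0 :=
    psi_le_psi_of_abs_le hdα (abs_zero.trans_le (abs_nonneg _))
  have hfar : psi d α R ≤ psi d α (m ^ (1 / α) * (2 * r)) :=
    psi_le_psi_of_abs_le hdα (abs_le_abs_of_nonneg (by positivity) hscaled)
  rw [div_mul_eq_mul_div, le_div_iff₀ hψR]
  exact mul_le_mul hnear hfar hψR.le hψ0.le

/-- For every `a > 0` and `M > 0` there is `C = C(d,α,a,M) > 0` with
`j^m(r) ≤ C j^m(2r)` for every `m ∈ (0,M]` and `r ∈ (0,a)`. -/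
theorem jm_doubling (d : ℕ) (hd : 1 ≤ d) (α : ℝ) (hα : α ∈ Set.Ioo (0:ℝ) 2)
    (a M : ℝ) (ha : 0 < a) (hM : 0 < M) :
    ∃ C : ℝ, 0 < C ∧ ∀ m ∈ Set.Ioc (0:ℝ) M, ∀ r ∈ Set.Ioo (0:ℝ) a,
      jm d α m r ≤ C * jm d α m (2 * r) :=
  jm_doubling_general d α hα a M
end

section
/- Let d ≥ 3 be an integer and α ∈ (0,2). There exists a constant c > 0 depending only on d and α such that for all x, y ∈ ℝ^d with x ≠ y, ∫_{ℝ^d} ∫_{ℝ^d} min(1, |x−z|^{−(d+α)}) · |z−w|^{α−d} · min(1, |w−y|^{−(d+α)}) dz dw ≤ c · |x−y|^{α−d}. -/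
/-!
Write `K u = ‖u‖ ^ (α - d)` and `G u = min 1 (‖u‖ ^ (-(d + α)))`. The key estimate is
`∫ K (v - w) G w dw ≤ C K v` for `v ≠ 0`: split the integral at the ball of radius
`R = max 1 (‖v‖ / 2)` around `v`. On that ball `G ≤ R ^ (-d)`, while scaling gives
`∫_{B(0,R)} K = R ^ α ∫_{B(0,1)} K`, finite because `α - d > -d`; off the ball
`K (v - w) ≤ R ^ (α - d)` and `G` is integrable because `d + α > d`. Both pieces are
`O(R ^ (α - d)) = O(K v)`.
Applying the estimate to the inner integral and then, after the reflection `z ↦ x + y - z`,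
to the outer one bounds the double integral by `C² K (x - y)`.
-/

open MeasureTheory Real Set Metric Module
open scoped ENNReal

section RieszKernel

variable {E : Type*} [NormedAddCommGroup E] [NormedSpace ℝ E] [FiniteDimensional ℝ E]
  [MeasurableSpace E] [BorelSpace E] (μ : Measure E) [μ.IsAddHaarMeasure]

theorem setLIntegral_ball_rpow_norm_eq_mul (p : ℝ) {R : ℝ} (hR : 0 < R) :
    ∫⁻ x in ball (0 : E) R, ENNReal.ofReal (‖x‖ ^ p) ∂μ
      = ENNReal.ofReal (R ^ (p + finrank ℝ E)) *
          ∫⁻ x in ball (0 : E) 1, ENNReal.ofReal (‖x‖ ^ p) ∂μ := by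
  set e := MeasurableEquiv.smul₀ (α := E) R hR.ne'
  have hμ : μ = ENNReal.ofReal (R ^ finrank ℝ E) • μ.map e := by
    rw [show ⇑e = (R • ·) from rfl, μ.map_addHaar_smul hR.ne', smul_smul,
      abs_of_pos (by positivity), ← ENNReal.ofReal_mul (by positivity),
      mul_inv_cancel₀ (by positivity), ENNReal.ofReal_one, one_smul]
  have hball : e ⁻¹' ball 0 R = ball 0 1 := by
    ext x
    simp [e, norm_smul, abs_of_pos hR, hR]
  have hscale : ∀ x : E, ‖R • x‖ ^ p = R ^ p * ‖x‖ ^ p := fun x => by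
    rw [norm_smul, norm_of_nonneg hR.le, mul_rpow hR.le (norm_nonneg x)]
  conv_lhs => rw [hμ]
  rw [Measure.restrict_smul, lintegral_smul_measure, e.restrict_map, lintegral_map_equiv, hball]
  change _ * ∫⁻ x in ball 0 1, ENNReal.ofReal (‖R • x‖ ^ p) ∂μ = _
  simp_rw [hscale, ENNReal.ofReal_mul (rpow_nonneg hR.le p)]
  rw [lintegral_const_mul' _ _ ENNReal.ofReal_ne_top, ← mul_assoc,
    ← ENNReal.ofReal_mul (by positivity), ← rpow_natCast, ← rpow_add hR, add_comm]

theorem setLIntegral_ball_rpow_norm_lt_top (hn : 1 ≤ finrank ℝ E) {p : ℝ}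
    (hp : -(finrank ℝ E : ℝ) < p) :
    ∫⁻ x in ball (0 : E) 1, ENNReal.ofReal (‖x‖ ^ p) ∂μ < ∞ := by
  refine IntegrableOn.setLIntegral_lt_top <|
    integrableOn_ball_of_norm_le_rpow (C := 1) (α := -p) hn (by linarith) ?_
      (measurable_norm.pow_const p).aestronglyMeasurable
  filter_upwards with x
  rw [one_mul, neg_neg, norm_of_nonneg (by positivity)]

theorem min_one_rpow_neg_le_two_rpow_mul {r t : ℝ} (hr : 0 ≤ r) (ht : 0 ≤ t) :
    min 1 (t ^ (-r)) ≤ 2 ^ r * (1 + t) ^ (-r) := by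
  have h2 : 2 ^ r * (1 + t) ^ (-r) = (2 / (1 + t)) ^ r := by
    rw [div_rpow zero_le_two (by positivity), rpow_neg (by positivity), div_eq_mul_inv]
  rw [h2]
  rcases le_total t 1 with ht1 | ht1
  · refine (min_le_left _ _).trans (one_le_rpow ?_ hr)
    rw [le_div_iff₀ (by positivity)]
    linarith
  · refine (min_le_right _ _).trans ?_
    rw [rpow_neg ht, ← inv_rpow ht]
    refine rpow_le_rpow (by positivity) ?_ hr
    rw [inv_eq_one_div, div_le_div_iff₀ (by positivity) (by positivity)]
    linarith

theorem lintegral_min_one_rpow_neg_norm_lt_top {r : ℝ} (hr : (finrank ℝ E : ℝ) < r) :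
    ∫⁻ x, ENNReal.ofReal (min 1 (‖x‖ ^ (-r))) ∂μ < ∞ := by
  refine Integrable.lintegral_lt_top <|
    ((integrable_one_add_norm hr).const_mul (2 ^ r)).mono'
      (measurable_const.min (measurable_norm.pow_const _)).aestronglyMeasurable ?_
  filter_upwards with x
  rw [norm_of_nonneg (le_min zero_le_one (by positivity))]
  exact min_one_rpow_neg_le_two_rpow_mul (by linarith [(finrank ℝ E).cast_nonneg (α := ℝ)])
    (norm_nonneg x)

variable {μ}

theorem lintegral_rpow_norm_sub_mul_le {p : ℝ} (hp : p ≤ 0) {g : E → ℝ≥0∞} {v : E} {R : ℝ}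
    (hR : 0 < R) (hg : ∀ w ∈ ball v R, g w ≤ ENNReal.ofReal (R ^ (-(finrank ℝ E : ℝ)))) :
    ∫⁻ w, ENNReal.ofReal (‖v - w‖ ^ p) * g w ∂μ ≤
      ENNReal.ofReal (R ^ p) *
        ((∫⁻ x in ball (0 : E) 1, ENNReal.ofReal (‖x‖ ^ p) ∂μ) + ∫⁻ w, g w ∂μ) := by
  rw [← lintegral_add_compl _ (measurableSet_ball (x := v) (ε := R)), mul_add]
  gcongr ?_ + ?_
  · have hshift : ∫⁻ w in ball v R, ENNReal.ofReal (‖v - w‖ ^ p) ∂μ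
        = ∫⁻ x in ball (0 : E) R, ENNReal.ofReal (‖x‖ ^ p) ∂μ := by
      have hpre : (v - ·) ⁻¹' ball (0 : E) R = ball v R := by
        ext w
        simp [dist_eq_norm, norm_sub_rev]
      rw [← hpre, (Measure.measurePreserving_sub_left μ v).setLIntegral_comp_preimage_emb
        (MeasurableEquiv.subLeft v).measurableEmbedding fun x => ENNReal.ofReal (‖x‖ ^ p)]
    calc ∫⁻ w in ball v R, ENNReal.ofReal (‖v - w‖ ^ p) * g w ∂μ
        ≤ ∫⁻ w in ball v R, ENNReal.ofReal (‖v - w‖ ^ p) *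
            ENNReal.ofReal (R ^ (-(finrank ℝ E : ℝ))) ∂μ :=
          setLIntegral_mono' measurableSet_ball fun w hw => by gcongr; exact hg w hw
      _ = ENNReal.ofReal (R ^ p) *
            ∫⁻ x in ball (0 : E) 1, ENNReal.ofReal (‖x‖ ^ p) ∂μ := by
          rw [lintegral_mul_const' _ _ ENNReal.ofReal_ne_top, hshift,
            setLIntegral_ball_rpow_norm_eq_mul μ p hR, mul_comm, ← mul_assoc,
            ← ENNReal.ofReal_mul (by positivity), ← rpow_add hR]
          ring_nf
  · calc ∫⁻ w in (ball v R)ᶜ, ENNReal.ofReal (‖v - w‖ ^ p) * g w ∂μ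
        ≤ ∫⁻ w in (ball v R)ᶜ, ENNReal.ofReal (R ^ p) * g w ∂μ := by
          refine setLIntegral_mono' measurableSet_ball.compl fun w hw => ?_
          refine mul_le_mul' (ENNReal.ofReal_le_ofReal <| rpow_le_rpow_of_nonpos hR ?_ hp) le_rfl
          simpa [dist_eq_norm, norm_sub_rev v w] using hw
      _ ≤ ENNReal.ofReal (R ^ p) * ∫⁻ w, g w ∂μ := by
          rw [lintegral_const_mul' _ _ ENNReal.ofReal_ne_top]
          exact mul_le_mul' le_rfl (setLIntegral_le_lintegral _ _)

theorem exists_lintegral_rpow_norm_sub_mul_le {p : ℝ} (hp_gt : -(finrank ℝ E : ℝ) < p)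
    (hp : p ≤ 0) {g : E → ℝ≥0∞} (hg_int : ∫⁻ w, g w ∂μ ≠ ∞) (hg_le_one : ∀ w, g w ≤ 1)
    (hg_decay : ∀ w, 1 ≤ ‖w‖ → g w ≤ ENNReal.ofReal (‖w‖ ^ (-(finrank ℝ E : ℝ)))) :
    ∃ C ≠ ∞, ∀ a b : E, a ≠ b →
      ∫⁻ w, ENNReal.ofReal (‖a - w‖ ^ p) * g (w - b) ∂μ ≤
        C * ENNReal.ofReal (‖a - b‖ ^ p) := by
  have hn : 1 ≤ finrank ℝ E := by
    have : (0 : ℝ) < finrank ℝ E := by linarith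
    exact_mod_cast this
  set I := (∫⁻ x in ball (0 : E) 1, ENNReal.ofReal (‖x‖ ^ p) ∂μ) + ∫⁻ w, g w ∂μ
  refine ⟨ENNReal.ofReal (2 ^ (-p)) * I,
    ENNReal.mul_ne_top ENNReal.ofReal_ne_top
      (ENNReal.add_ne_top.2 ⟨(setLIntegral_ball_rpow_norm_lt_top μ hn hp_gt).ne, hg_int⟩),
    fun a b hab => ?_⟩
  set v := a - b
  have hv : 0 < ‖v‖ / 2 := by simpa [v, sub_eq_zero] using hab
  set R := max 1 (‖v‖ / 2)
  have hR : 0 < R := lt_max_of_lt_left one_pos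
  have hg : ∀ w ∈ ball v R, g w ≤ ENNReal.ofReal (R ^ (-(finrank ℝ E : ℝ))) := by
    intro w hw
    rcases le_total (‖v‖ / 2) 1 with hv1 | hv1
    · simpa [R, max_eq_left hv1] using hg_le_one w
    · have hRw : R ≤ ‖w‖ := by
        rw [mem_ball, dist_eq_norm] at hw
        linarith [norm_sub_norm_le v w, norm_sub_rev w v, max_eq_right hv1]
      refine (hg_decay w ((le_max_left _ _).trans hRw)).trans <|
        ENNReal.ofReal_le_ofReal (rpow_le_rpow_of_nonpos hR hRw (by simp))
  have htranslate : ∫⁻ w, ENNReal.ofReal (‖a - w‖ ^ p) * g (w - b) ∂μ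
      = ∫⁻ w, ENNReal.ofReal (‖v - w‖ ^ p) * g w ∂μ := by
    rw [← lintegral_add_right_eq_self _ b]
    simp only [add_sub_cancel_right, v, sub_sub, add_comm b]
  have hRp : R ^ p ≤ 2 ^ (-p) * ‖v‖ ^ p := by
    rw [rpow_neg zero_le_two, inv_mul_eq_div, ← div_rpow (norm_nonneg v) zero_le_two]
    exact rpow_le_rpow_of_nonpos hv (le_max_right _ _) hp
  calc ∫⁻ w, ENNReal.ofReal (‖a - w‖ ^ p) * g (w - b) ∂μ
      = ∫⁻ w, ENNReal.ofReal (‖v - w‖ ^ p) * g w ∂μ := htranslate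
    _ ≤ ENNReal.ofReal (R ^ p) * I := lintegral_rpow_norm_sub_mul_le hp hR hg
    _ ≤ ENNReal.ofReal (2 ^ (-p) * ‖v‖ ^ p) * I := by gcongr
    _ = ENNReal.ofReal (2 ^ (-p)) * I * ENNReal.ofReal (‖v‖ ^ p) := by
        rw [ENNReal.ofReal_mul (by positivity)]
        ring

end RieszKernel

/-- The convolution-type double integral bound used for Green function estimates:
`∫∫ min(1,|x-z|^{-(d+α)}) |z-w|^{α-d} min(1,|w-y|^{-(d+α)}) dz dw ≤ c |x-y|^{α-d}`. -/
theorem double_integral_bound (d : ℕ) (hd : 3 ≤ d) (α : ℝ) (hα : α ∈ Set.Ioo (0:ℝ) 2) :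
    ∃ c : ℝ, 0 < c ∧ ∀ x y : EuclideanSpace ℝ (Fin d), x ≠ y →
      (∫⁻ z : EuclideanSpace ℝ (Fin d), ∫⁻ w : EuclideanSpace ℝ (Fin d),
          ENNReal.ofReal
            (min 1 (‖x - z‖ ^ (-((d : ℝ) + α))) * ‖z - w‖ ^ (α - (d : ℝ)) *
              min 1 (‖w - y‖ ^ (-((d : ℝ) + α)))))
        ≤ ENNReal.ofReal (c * ‖x - y‖ ^ (α - (d : ℝ))) := by
  obtain ⟨hα_pos, hα_lt⟩ := hα
  have hαd : α < d := by linarith [show (3 : ℝ) ≤ d by exact_mod_cast hd]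
  set G : EuclideanSpace ℝ (Fin d) → ℝ≥0∞ :=
    fun u => ENNReal.ofReal (min 1 (‖u‖ ^ (-((d : ℝ) + α))))
  set K : EuclideanSpace ℝ (Fin d) → ℝ≥0∞ := fun u => ENNReal.ofReal (‖u‖ ^ (α - (d : ℝ)))
  obtain ⟨C, hC, hconv⟩ := exists_lintegral_rpow_norm_sub_mul_le (μ := volume) (p := α - d) (g := G)
    (by rw [finrank_euclideanSpace_fin]; linarith) (by linarith)
    (lintegral_min_one_rpow_neg_norm_lt_top volume
      (by rw [finrank_euclideanSpace_fin]; linarith)).ne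
    (fun w => ENNReal.ofReal_le_one.2 (min_le_left _ _))
    (fun w hw => ENNReal.ofReal_le_ofReal <| (min_le_right _ _).trans
      (rpow_le_rpow_of_exponent_le hw (by rw [finrank_euclideanSpace_fin]; linarith)))
  have : Nontrivial (EuclideanSpace ℝ (Fin d)) :=
    Module.nontrivial_of_finrank_pos (R := ℝ) (by rw [finrank_euclideanSpace_fin]; omega)
  refine ⟨(C * C).toReal + 1, by positivity, fun x y hxy => ?_⟩
  have hsplit : ∀ z w, ENNReal.ofReal (min 1 (‖x - z‖ ^ (-((d : ℝ) + α))) *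
      ‖z - w‖ ^ (α - (d : ℝ)) * min 1 (‖w - y‖ ^ (-((d : ℝ) + α))))
        = G (x - z) * (K (z - w) * G (w - y)) := fun z w => by
    rw [mul_assoc, ENNReal.ofReal_mul (le_min zero_le_one (by positivity)),
      ENNReal.ofReal_mul (by positivity)]
  calc _ = ∫⁻ z, G (x - z) * ∫⁻ w, K (z - w) * G (w - y) := by
        refine lintegral_congr fun z => ?_
        rw [← lintegral_const_mul' _ _ ENNReal.ofReal_ne_top]
        exact lintegral_congr (hsplit z)
    _ ≤ ∫⁻ z, G (x - z) * (C * K (z - y)) := by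
        refine lintegral_mono_ae ?_
        filter_upwards [Measure.ae_ne volume y] with z hz
        exact mul_le_mul' le_rfl (hconv z y hz)
    _ = C * ∫⁻ z, K (x - z) * G (z - y) := by
        rw [← lintegral_const_mul' _ _ hC, ← lintegral_sub_left_eq_self _ (x + y)]
        congr 1 with z
        rw [show x - (x + y - z) = z - y by abel, show x + y - z - y = x - z by abel]
        ring
    _ ≤ C * (C * K (x - y)) := mul_le_mul' le_rfl (hconv x y hxy)
    _ ≤ ENNReal.ofReal (((C * C).toReal + 1) * ‖x - y‖ ^ (α - (d : ℝ))) := by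
        rw [← mul_assoc, ENNReal.ofReal_mul (by positivity)]
        refine mul_le_mul' ?_ le_rfl
        rw [ENNReal.le_ofReal_iff_toReal_le (ENNReal.mul_ne_top hC hC) (by positivity)]
        linarith
end
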